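/- Let T be an invertible 2×2 matrix over F_{q^m} with entries t_{i,j}, and let A, B be ρ-dimensional F_q-subspaces of F_{q^m} with A ≠ λB for all λ ∈ F_{q^m}. Then the F_q-subspace T = t_{1,1}A + t_{2,1}A + t_{1,2}B + t_{2,2}B has dimension strictly greater than ρ. -/
import Mathlib

lemma stmt8_aux {Fq Fqm : Type*} [Field Fq] [Fintype Fq] [Field Fqm] [Fintype Fqm]
    [Algebra Fq Fqm] (ρ : ℕ) (A B S : Submodule Fq Fqm) (t s : Fqm)
    (ht : t ≠ 0) (hs : s ≠ 0)
    (hA : Module.finrank Fq A = ρ) (hB : Module.finrank Fq B = ρ)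
    (h1 : A.map (LinearMap.mulLeft Fq t) ≤ S)
    (h2 : B.map (LinearMap.mulLeft Fq s) ≤ S)
    (hAB : ∀ l : Fqm, A ≠ B.map (LinearMap.mulLeft Fq l)) :
    ρ < Module.finrank Fq S := by

  have hinj : ∀ a : Fqm, a ≠ 0 → Function.Injective (LinearMap.mulLeft Fq a) := by
    intro a ha x y hxy
    exact mul_left_cancel₀ ha hxy
  have hrk : ∀ (a : Fqm) (ha : a ≠ 0) (V : Submodule Fq Fqm),
      Module.finrank Fq (V.map (LinearMap.mulLeft Fq a)) = Module.finrank Fq V := by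
    intro a ha V
    exact (LinearEquiv.finrank_eq (Submodule.equivMapOfInjective _ (hinj a ha) V)).symm
  have hle : ρ ≤ Module.finrank Fq S := by
    calc ρ = Module.finrank Fq (A.map (LinearMap.mulLeft Fq t)) := by rw [hrk t ht A, hA]
    _ ≤ Module.finrank Fq S := Submodule.finrank_mono h1
  rcases lt_or_eq_of_le hle with h | h
  · exact h
  · exfalso
    have hAS : A.map (LinearMap.mulLeft Fq t) = S :=
      Submodule.eq_of_le_of_finrank_eq h1 (by rw [hrk t ht A, hA, h])
    have hBS : B.map (LinearMap.mulLeft Fq s) = S :=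
      Submodule.eq_of_le_of_finrank_eq h2 (by rw [hrk s hs B, hB, h])
    apply hAB (t⁻¹ * s)
    have : A = (A.map (LinearMap.mulLeft Fq t)).map (LinearMap.mulLeft Fq t⁻¹) := by
      rw [← Submodule.map_comp, ← LinearMap.mulLeft_mul, inv_mul_cancel₀ ht,
        LinearMap.mulLeft_one, Submodule.map_id]
    rw [this, hAS, ← hBS, ← Submodule.map_comp, ← LinearMap.mulLeft_mul]

/-- If `T` is an invertible `2×2` matrix over `Fqm` and `A, B` are `ρ`-dimensional
`Fq`-subspaces of `Fqm` with `A ≠ λ•B` for all `λ`, then the subspace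
`t₁₁A + t₂₁A + t₁₂B + t₂₂B` has dimension strictly greater than `ρ`. -/
theorem stmt8 {Fq Fqm : Type*} [Field Fq] [Fintype Fq] [Field Fqm] [Fintype Fqm]
    [Algebra Fq Fqm] (T : Matrix (Fin 2) (Fin 2) Fqm) (hT : IsUnit T) (ρ : ℕ)
    (A B : Submodule Fq Fqm)
    (hA : Module.finrank Fq A = ρ) (hB : Module.finrank Fq B = ρ)
    (hAB : ∀ l : Fqm, A ≠ B.map (LinearMap.mulLeft Fq l)) :
    ρ < Module.finrank Fq
      ↥(A.map (LinearMap.mulLeft Fq (T 0 0)) ⊔ A.map (LinearMap.mulLeft Fq (T 1 0)) ⊔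
        B.map (LinearMap.mulLeft Fq (T 0 1)) ⊔ B.map (LinearMap.mulLeft Fq (T 1 1))) := by
  have hdet : T.det ≠ 0 := by
    intro h
    have := hT.map (Matrix.detMonoidHom (n := Fin 2) (R := Fqm))
    simp [Matrix.detMonoidHom, h] at this

  rw [Matrix.det_fin_two] at hdet
  set S := A.map (LinearMap.mulLeft Fq (T 0 0)) ⊔ A.map (LinearMap.mulLeft Fq (T 1 0)) ⊔
        B.map (LinearMap.mulLeft Fq (T 0 1)) ⊔ B.map (LinearMap.mulLeft Fq (T 1 1)) with hS
  have hA0 : A.map (LinearMap.mulLeft Fq (T 0 0)) ≤ S := by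
    rw [hS]; exact le_sup_of_le_left (le_sup_of_le_left le_sup_left)
  have hA1 : A.map (LinearMap.mulLeft Fq (T 1 0)) ≤ S := by
    rw [hS]; exact le_sup_of_le_left (le_sup_of_le_left le_sup_right)
  have hB0 : B.map (LinearMap.mulLeft Fq (T 0 1)) ≤ S := by
    rw [hS]; exact le_sup_of_le_left le_sup_right
  have hB1 : B.map (LinearMap.mulLeft Fq (T 1 1)) ≤ S := le_sup_right
  have hcol0 : T 0 0 ≠ 0 ∨ T 1 0 ≠ 0 := by
    by_contra h
    push_neg at h
    rw [h.1, h.2] at hdet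
    simp at hdet
  have hcol1 : T 0 1 ≠ 0 ∨ T 1 1 ≠ 0 := by
    by_contra h
    push_neg at h
    rw [h.1, h.2] at hdet
    simp at hdet
  rcases hcol0 with ht | ht <;> rcases hcol1 with hs | hs
  · exact stmt8_aux ρ A B S _ _ ht hs hA hB hA0 hB0 hAB
  · exact stmt8_aux ρ A B S _ _ ht hs hA hB hA0 hB1 hAB
  · exact stmt8_aux ρ A B S _ _ ht hs hA hB hA1 hB0 hAB
  · exact stmt8_aux ρ A B S _ _ ht hs hA hB hA1 hB1 hAB
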